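/- arXiv:2005.09601 — 2 statements merged into one kernel-verified Lean document; each statement's English description precedes it below -/
import Mathlib

section
/- For t = 0 (the Veronese type case): if u and v are monomials of degree d in n variables with all exponents at most c, and uv = x_{i_1}⋯x_{i_{2d}} with i_1 ≤ ... ≤ i_{2d}, then both x_{i_1}x_{i_3}⋯x_{i_{2d-1}} and x_{i_2}x_{i_4}⋯x_{i_{2d}} have all exponents at most c. In particular each exponent of the sorted monomials is at most the ceiling of (deg_{x_i}(u) + deg_{x_i}(v))/2. -/
/-- The alternating extraction: `alt true` takes the entries at positions
`1,3,5,…` (1-based), `alt false` those at positions `2,4,6,…`. -/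
def alt : Bool → List ℕ → List ℕ
  | _, [] => []
  | true, a :: l => a :: alt false l
  | false, _ :: l => alt true l

/-!
In the weakly increasing arrangement `w` of `uv` the copies of `x_i` form one contiguous block,
of length `k = deg_{x_i} u + deg_{x_i} v`. Taking every other entry of `w` picks alternately from
that block, so each of the two sorted monomials receives `⌈k/2⌉` or `⌊k/2⌋` of its copies, and
`⌈k/2⌉ ≤ c` once both degrees are at most `c`.
-/

section

open List

theorem alt_sublist : ∀ (b : Bool) (l : List ℕ), alt b l <+ l
  | _, [] => Sublist.slnil
  | true, _ :: l => (alt_sublist false l).cons_cons _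
  | false, _ :: l => (alt_sublist true l).cons _

/-- The third conjunct, for a block of `i`'s starting at the head (which goes to `alt true`),
is what makes the induction go through. -/
theorem count_alt_bounds_of_pairwise {l : List ℕ} (hl : l.Pairwise (· ≤ ·)) (i : ℕ) :
    (alt true l).count i ≤ (l.count i + 1) / 2 ∧
      (alt false l).count i ≤ (l.count i + 1) / 2 ∧
      ((∀ x ∈ l, i ≤ x) → (alt false l).count i ≤ l.count i / 2) := by
  induction l with
  | nil => simp [alt]
  | cons a t ih =>
    obtain ⟨hat, ht⟩ := pairwise_cons.mp hl
    obtain ⟨ih_true, ih_false, ih_head⟩ := ih ht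
    have hcount : (a :: t).count i = t.count i + if a = i then 1 else 0 := by
      simp [count_cons]
    refine ⟨?_, ?_, fun hi => ?_⟩
    · show (a :: alt false t).count i ≤ _
      by_cases hai : a = i
      · subst hai
        have := ih_head hat
        simp only [count_cons_self]
        omega
      · simpa only [count_cons_of_ne hai] using ih_false
    · show (alt true t).count i ≤ _
      rw [hcount]
      split_ifs <;> omega
    · show (alt true t).count i ≤ _
      by_cases hai : a = i
      · subst hai
        simp only [count_cons_self]
        omega
      · have hit : i ∉ t := fun hmem =>
          hai (le_antisymm (hat i hmem) (hi a mem_cons_self))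
        have := ((alt_sublist true t).count_le i).trans (count_eq_zero.mpr hit).le
        omega

theorem count_alt_le_of_pairwise {l : List ℕ} (hl : l.Pairwise (· ≤ ·)) (b : Bool) (i : ℕ) :
    (alt b l).count i ≤ (l.count i + 1) / 2 := by
  cases b
  · exact (count_alt_bounds_of_pairwise hl i).2.1
  · exact (count_alt_bounds_of_pairwise hl i).1

end

theorem stmt_2_general (c : ℕ) (u v : List ℕ)
    (huc : ∀ i, u.count i ≤ c) (hvc : ∀ i, v.count i ≤ c)
    (w : List ℕ) (hw : (↑w : Multiset ℕ) = (↑u : Multiset ℕ) + (↑v : Multiset ℕ))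
    (hws : w.Pairwise (· ≤ ·)) :
    (∀ i, (alt true w).count i ≤ (u.count i + v.count i + 1) / 2 ∧
        (alt false w).count i ≤ (u.count i + v.count i + 1) / 2) ∧
    (∀ i, (alt true w).count i ≤ c ∧ (alt false w).count i ≤ c) := by
  have hcount (i : ℕ) : w.count i = u.count i + v.count i := by
    simpa using congrArg (Multiset.count i) hw
  have hhalf (b : Bool) (i : ℕ) : (alt b w).count i ≤ (u.count i + v.count i + 1) / 2 :=
    hcount i ▸ count_alt_le_of_pairwise hws b i
  have hc (i : ℕ) : (u.count i + v.count i + 1) / 2 ≤ c := by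
    have := huc i
    have := hvc i
    omega
  exact ⟨fun i => ⟨hhalf true i, hhalf false i⟩,
    fun i => ⟨(hhalf true i).trans (hc i), (hhalf false i).trans (hc i)⟩⟩

/-- (Veronese type case, `t = 0`.) If `u, v` are monomials of
degree `d` in `n` variables (encoded as weakly increasing lists of indices,
exponents being multiplicities) with all exponents at most `c`, and `w` is the
weakly increasing arrangement of `uv`, then both sorted monomials
`alt true w = x_{i₁}x_{i₃}⋯x_{i_{2d-1}}` and `alt false w = x_{i₂}x_{i₄}⋯x_{i_{2d}}`
have all exponents at most `c`; indeed each of their exponents is at most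
`⌈(deg_{x_i} u + deg_{x_i} v)/2⌉`. -/
theorem stmt_2 (c n d : ℕ) (u v : List ℕ)
    (hud : u.length = d) (hvd : v.length = d)
    (hus : u.Pairwise (· ≤ ·)) (hvs : v.Pairwise (· ≤ ·))
    (hun : ∀ i ∈ u, 1 ≤ i ∧ i ≤ n) (hvn : ∀ i ∈ v, 1 ≤ i ∧ i ≤ n)
    (huc : ∀ i, u.count i ≤ c) (hvc : ∀ i, v.count i ≤ c)
    (w : List ℕ) (hw : (↑w : Multiset ℕ) = (↑u : Multiset ℕ) + (↑v : Multiset ℕ))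
    (hws : w.Pairwise (· ≤ ·)) :
    (∀ i, (alt true w).count i ≤ (u.count i + v.count i + 1) / 2 ∧
        (alt false w).count i ≤ (u.count i + v.count i + 1) / 2) ∧
    (∀ i, (alt true w).count i ≤ c ∧ (alt false w).count i ≤ c) :=
  stmt_2_general c u v huc hvc w hw hws
end

section
/- The c-bounded t-spread Veronese ideal I_{c,(n,d,t)} has linear quotients with respect to the lexicographic order on its minimal generators: if G(I) = {u_1 > ... > u_m} in decreasing lexicographic order, then for each r, the colon ideal (u_1,...,u_{r-1}) : u_r is generated by variables. More precisely, for each k < r there exists a variable x_i ∈ (u_1,...,u_{r-1}) : u_r dividing u_k/gcd(u_k,u_r). -/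
/-- A list (representing a weakly increasing multiset) is `t`-spread if
successive entries differ by at least `t`. -/
def TSpread (t : ℕ) (A : List ℕ) : Prop :=
  A.Chain' (fun a b => a + t ≤ b)

/-- A block (for the parameter `t`) is a nonempty run whose successive
differences are exactly `t`. -/
def IsBlock (t : ℕ) (B : List ℕ) : Prop :=
  B ≠ [] ∧ B.Chain' (fun a b => b = a + t)

/-- `Bs` is the decomposition of `A` into maximal blocks. -/
def IsBlockDecomp (t : ℕ) (A : List ℕ) (Bs : List (List ℕ)) : Prop :=
  A = Bs.flatten ∧ (∀ B ∈ Bs, IsBlock t B) ∧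
    Bs.Chain' (fun B C => ∀ x ∈ B.getLast?, ∀ y ∈ C.head?, x + t < y)

/-- `A` is `c`-bounded: every block of its (unique) maximal block
decomposition has size at most `c`. -/
def CBounded (c t : ℕ) (A : List ℕ) : Prop :=
  ∀ Bs, IsBlockDecomp t A Bs → ∀ B ∈ Bs, B.length ≤ c

/-- The set of (sorted index lists of) minimal monomial generators of the
`c`-bounded `t`-spread Veronese ideal `I_{c,(n,d,t)}`. -/
def Gen (c n d t : ℕ) : Set (List ℕ) :=
  {A | A.length = d ∧ TSpread t A ∧ CBounded c t A ∧ ∀ i ∈ A, 1 ≤ i ∧ i ≤ n}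

/-- Monomial associated to a multiset of indices in `{1, …, n}`. -/
noncomputable def monList (K : Type*) [Field K] (n : ℕ) (A : List ℕ) :
    MvPolynomial (Fin n) K :=
  (A.map (fun i => if h : i - 1 < n then MvPolynomial.X (⟨i - 1, h⟩ : Fin n) else 1)).prod


open MvPolynomial

/-! If `u = P ++ a :: A` precedes the generator `w = P ++ b :: B` lexicographically, with `a < b`,
then `v = P ++ a :: B` is again a generator preceding `w`: the gap between `a` and `B` exceeds `t`,
so every run of `v` is a run of `u` or of `w`. Now `v` divides `x_a w`, while `x_a` divides
`u / gcd(u, w)` because `a` does not occur in `b :: B`. For monomial ideals this exchange property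
is exactly what makes the colon ideal generated by the variables `x_i` with `x_i w` in the ideal. -/

/-- Unlike `CBounded`, this makes no reference to a block decomposition, so it passes to infixes
and to concatenations across a gap other than `t`. -/
def RunBounded (c t : ℕ) (A : List ℕ) : Prop :=
  ∀ L : List ℕ, L ≠ [] → L.IsChain (fun x y => y = x + t) → L <:+: A → L.length ≤ c

namespace RunBounded

variable {c t : ℕ} {A B : List ℕ}

lemma of_infix (h : RunBounded c t A) (hBA : B <:+: A) : RunBounded c t B :=
  fun L hne hch hinf => h L hne hch (hinf.trans hBA)

lemma of_length_le (h : A.length ≤ c) : RunBounded c t A :=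
  fun _ _ _ hinf => hinf.length_le.trans h

lemma append (hA : RunBounded c t A) (hB : RunBounded c t B)
    (hgap : ∀ x ∈ A.getLast?, ∀ y ∈ B.head?, x + t ≠ y) :
    RunBounded c t (A ++ B) := by
  intro L hne hch hinf
  obtain ⟨U, V, hUV⟩ := hinf
  rcases List.append_eq_append_iff.1 (by simpa [List.append_assoc] using hUV :
      U ++ (L ++ V) = A ++ B) with ⟨a, ha1, ha2⟩ | ⟨a, ha1, ha2⟩
  · rcases List.append_eq_append_iff.1 ha2 with ⟨b, hb1, hb2⟩ | ⟨b, hb1, hb2⟩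
    · exact hA L hne hch ⟨U, b, by rw [ha1, hb1, List.append_assoc]⟩
    · -- `L = a ++ b` straddles the junction
      rcases eq_or_ne a [] with rfl | hane
      · exact hB L hne hch ⟨[], V, by simpa using ha2⟩
      rcases eq_or_ne b [] with rfl | hbne
      · exact hA L hne hch ⟨U, [], by simp [ha1, hb1]⟩
      obtain ⟨y, b', rfl⟩ := List.exists_cons_of_ne_nil hbne
      obtain ⟨a', x, rfl⟩ := (List.eq_nil_or_concat a).resolve_left hane
      subst hb1
      refine absurd ((List.isChain_append.1 hch).2.2 x (by simp) y rfl).symm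
        (hgap x (by simp [ha1]) y (by simp [hb2]))
  · exact hB L hne hch ⟨a, V, by rw [ha2, List.append_assoc]⟩

lemma cBounded (h : RunBounded c t A) : CBounded c t A := by
  rintro Bs ⟨rfl, hblocks, _⟩ B hB
  exact h B (hblocks B hB).1 (hblocks B hB).2 (List.infix_of_mem_flatten hB)

end RunBounded

lemma exists_isBlockDecomp {t : ℕ} : ∀ {A : List ℕ}, TSpread t A → ∃ Bs, IsBlockDecomp t A Bs
  | [], _ => ⟨[], rfl, by simp, List.isChain_nil⟩
  | a :: l, hA => by
    obtain ⟨hhead, hl⟩ := List.isChain_cons.1 hA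
    obtain ⟨Bs, rfl, hblocks, hgaps⟩ := exists_isBlockDecomp hl
    have singleton_isBlock : IsBlock t [a] := ⟨by simp, List.isChain_singleton a⟩
    match Bs, hblocks, hgaps, hhead with
    | [], _, _, _ =>
      exact ⟨[[a]], by simp, by simpa using singleton_isBlock, List.isChain_singleton _⟩
    | [] :: _, hblocks, _, _ => exact absurd rfl (hblocks [] (by simp)).1
    | (b :: B) :: Bs, hblocks, hgaps, hhead =>
      have hab : a + t ≤ b := hhead b (by simp)
      have hbB : IsBlock t (b :: B) := hblocks _ (by simp)
      rcases eq_or_ne b (a + t) with rfl | hb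
      · refine ⟨(a :: (a + t) :: B) :: Bs, by simp, ?_, ?_⟩
        · simp only [List.mem_cons, forall_eq_or_imp]
          exact ⟨⟨by simp, List.isChain_cons_cons.2 ⟨rfl, hbB.2⟩⟩,
            fun C hC => hblocks C (by simp [hC])⟩
        · cases Bs with
          | nil => exact List.isChain_singleton _
          | cons C Cs =>
            obtain ⟨hgap, hgaps⟩ := List.isChain_cons_cons.1 hgaps
            exact List.isChain_cons_cons.2 ⟨by simpa [List.getLast?_cons_cons] using hgap, hgaps⟩
      · refine ⟨[a] :: (b :: B) :: Bs, by simp, ?_, ?_⟩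
        · simp only [List.mem_cons, forall_eq_or_imp]
          exact ⟨singleton_isBlock, hbB, fun C hC => hblocks C (by simp [hC])⟩
        · exact List.isChain_cons_cons.2 ⟨by simp; omega, hgaps⟩

lemma runBounded_flatten {c t : ℕ} :
    ∀ {Bs : List (List ℕ)}, (∀ B ∈ Bs, B ≠ [] ∧ B.length ≤ c) →
      Bs.IsChain (fun B C => ∀ x ∈ B.getLast?, ∀ y ∈ C.head?, x + t < y) →
      RunBounded c t Bs.flatten
  | [], _, _ => RunBounded.of_length_le (by simp)
  | [B], hBs, _ => by simpa using RunBounded.of_length_le (hBs B (by simp)).2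
  | B :: C :: Bs, hBs, hgaps => by
    obtain ⟨hBC, hCBs⟩ := List.isChain_cons_cons.1 hgaps
    have hC : C ≠ [] := (hBs C (by simp)).1
    rw [List.flatten_cons]
    refine (RunBounded.of_length_le (hBs B (by simp)).2).append
      (runBounded_flatten (fun D hD => hBs D (List.mem_cons_of_mem B hD)) hCBs) ?_
    intro x hx y hy
    have : y ∈ C.head? := by
      obtain ⟨z, C', rfl⟩ := List.exists_cons_of_ne_nil hC
      simpa using hy
    exact (hBC x hx y this).ne

lemma CBounded.runBounded {c t : ℕ} {A : List ℕ} (hts : TSpread t A)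
    (h : CBounded c t A) : RunBounded c t A := by
  obtain ⟨Bs, hdec⟩ := exists_isBlockDecomp hts
  obtain ⟨rfl, hblocks, hgaps⟩ := hdec
  exact runBounded_flatten (fun B hB => ⟨(hblocks B hB).1, h Bs ⟨rfl, hblocks, hgaps⟩ B hB⟩) hgaps

lemma exists_eq_append_cons_of_lex {α : Type*} {r : α → α → Prop} :
    ∀ {u w : List α}, List.Lex r u w → u.length = w.length →
      ∃ P a b A B, u = P ++ a :: A ∧ w = P ++ b :: B ∧ r a b
  | _, _, .nil, hlen => by simp at hlen
  | _, _, .cons (a := p) h, hlen => by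
    obtain ⟨P, a, b, A, B, rfl, rfl, hab⟩ := exists_eq_append_cons_of_lex h (by simpa using hlen)
    exact ⟨p :: P, a, b, A, B, rfl, rfl, hab⟩
  | _, _, .rel (a₁ := a) (l₁ := A) (a₂ := b) (l₂ := B) hab, _ => ⟨[], a, b, A, B, rfl, rfl, hab⟩

lemma append_cons_mem_gen {c n d t a b : ℕ} {P A B : List ℕ}
    (hu : P ++ a :: A ∈ Gen c n d t) (hw : P ++ b :: B ∈ Gen c n d t) (hab : a < b) :
    P ++ a :: B ∈ Gen c n d t := by
  obtain ⟨hlen, hts, hcb, hbd⟩ := hu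
  obtain ⟨hlen', hts', hcb', hbd'⟩ := hw
  obtain ⟨hP, -, hPa⟩ := List.isChain_append.1 hts
  obtain ⟨-, hbB, -⟩ := List.isChain_append.1 hts'
  obtain ⟨hbhead, hB⟩ := List.isChain_cons.1 hbB
  -- the gap between `a` and `B` exceeds `t`, so no run of `P ++ a :: B` crosses it
  have hgap : ∀ y ∈ B.head?, a + t < y := fun y hy => by have := hbhead y hy; omega
  refine ⟨by simp at hlen hlen' ⊢; omega,
    List.isChain_append.2 ⟨hP, List.isChain_cons.2 ⟨fun y hy => (hgap y hy).le, hB⟩, hPa⟩, ?_, ?_⟩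
  · have hPa : RunBounded c t (P ++ [a]) := (hcb.runBounded hts).of_infix ⟨[], A, by simp⟩
    have hB : RunBounded c t B := (hcb'.runBounded hts').of_infix ⟨P ++ [b], [], by simp⟩
    simpa using (hPa.append hB fun x hx y hy => by
      simp only [List.getLast?_concat, Option.mem_some_iff] at hx
      exact hx ▸ (hgap y hy).ne).cBounded
  · intro i hi
    simp only [List.mem_append, List.mem_cons] at hi
    rcases hi with hi | rfl | hi
    · exact hbd i (by simp [hi])
    · exact hbd i (by simp)
    · exact hbd' i (by simp [hi])

theorem exists_count_lt_of_lex_of_mem_gen {c n d t : ℕ} {u w : List ℕ}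
    (hu : u ∈ Gen c n d t) (hw : w ∈ Gen c n d t) (hlt : List.Lex (· < ·) u w) :
    ∃ q, u.count q > w.count q ∧
      ∃ v ∈ Gen c n d t, List.Lex (· < ·) v w ∧ (↑v : Multiset ℕ) ≤ q ::ₘ (↑w : Multiset ℕ) := by
  obtain ⟨P, a, b, A, B, rfl, rfl, hab⟩ := exists_eq_append_cons_of_lex hlt (hu.1.trans hw.1.symm)
  refine ⟨a, ?_, P ++ a :: B, append_cons_mem_gen hu hw hab,
    List.Lex.append_left _ (List.Lex.rel hab) P, ?_⟩
  · have hbB : (b :: B).Pairwise (· ≤ ·) :=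
      List.isChain_iff_pairwise.1 ((List.isChain_append.1 hw.2.1).2.1.imp fun x y h => by omega)
    have ha : a ∉ b :: B := fun ha => by
      rcases List.mem_cons.1 ha with rfl | ha
      · omega
      · exact absurd (List.rel_of_pairwise_cons hbB ha) (by omega)
    simp only [List.count_append, List.count_cons_self, List.count_eq_zero.2 ha]
    omega
  · rw [Multiset.cons_coe, Multiset.coe_le]
    exact ((((List.sublist_cons_self b B).cons_cons a).append_left P).subperm).trans
      List.perm_middle.subperm

theorem colon_span_monomial_eq_span_X {σ R : Type*} [CommSemiring R] {S : Set (σ →₀ ℕ)}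
    {s : σ →₀ ℕ} (h : ∀ a ∈ S, ∃ i, s i < a i ∧ ∃ b ∈ S, b ≤ Finsupp.single i 1 + s) :
    (Ideal.span ((fun a => monomial a (1 : R)) '' S)).colon (Ideal.span {monomial s (1 : R)}) =
      Ideal.span (X '' {i | ∃ b ∈ S, b ≤ Finsupp.single i 1 + s}) := by
  apply le_antisymm
  · intro f hf
    rw [Ideal.mem_colon_span_singleton] at hf
    rw [mem_ideal_span_X_image]
    intro ξ hξ
    obtain ⟨a, ha, hle⟩ := mem_ideal_span_monomial_image.1 hf (ξ + s) (by
      rw [mem_support_iff, coeff_mul_monomial, mul_one]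
      exact mem_support_iff.1 hξ)
    obtain ⟨i, hi, hb⟩ := h a ha
    refine ⟨i, hb, ?_⟩
    have := hle i
    simp only [Finsupp.add_apply] at this
    omega
  · rw [Ideal.span_le]
    rintro _ ⟨i, ⟨b, hb, hbi⟩, rfl⟩
    have hfactor : monomial (Finsupp.single i 1 + s) (1 : R) =
        monomial (Finsupp.single i 1 + s - b) 1 * monomial b 1 := by
      rw [monomial_mul, one_mul, tsub_add_cancel_of_le hbi]
    rw [SetLike.mem_coe, Ideal.mem_colon_span_singleton, ← pow_one (X i), ← monomial_single_add,
      hfactor]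
    exact Ideal.mul_mem_left _ _ (Ideal.subset_span ⟨b, hb, rfl⟩)

/-- As in `monList`, index `q ≥ 1` stands for the variable `X ⟨q - 1, _⟩`; unlike `monList`,
index `0` is ignored. -/
noncomputable def exponent (n : ℕ) (A : List ℕ) : Fin n →₀ ℕ :=
  Finsupp.equivFunOnFinite.symm fun i => A.count (i.val + 1)

lemma exponent_apply {n : ℕ} (A : List ℕ) (i : Fin n) : exponent n A i = A.count (i.val + 1) := rfl

lemma exponent_mono {n : ℕ} {A B : List ℕ} (h : (↑A : Multiset ℕ) ≤ ↑B) :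
    exponent n A ≤ exponent n B :=
  fun i => by simpa only [exponent_apply, Multiset.coe_count] using Multiset.count_le_of_le _ h

lemma exponent_cons_of_le {n q : ℕ} (A : List ℕ) (hq₀ : 1 ≤ q) (hq : q ≤ n) :
    exponent n (q :: A) = Finsupp.single ⟨q - 1, by omega⟩ 1 + exponent n A := by
  ext i
  simp only [exponent_apply, List.count_cons, Finsupp.add_apply, Finsupp.single_apply, Fin.ext_iff,
    beq_iff_eq]
  split_ifs <;> omega

lemma exponent_cons_of_lt {n q : ℕ} (A : List ℕ) (hq : n < q) :
    exponent n (q :: A) = exponent n A := by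
  ext i
  have := i.2
  simp only [exponent_apply, List.count_cons, beq_iff_eq]
  split_ifs <;> omega

lemma monList_eq_monomial (K : Type*) [Field K] (n : ℕ) {A : List ℕ} (hA : 0 ∉ A) :
    monList K n A = monomial (exponent n A) 1 := by
  induction A with
  | nil => rw [show exponent n [] = 0 from Finsupp.ext fun _ => rfl]; rfl
  | cons a A ih =>
    obtain ⟨ha, hA⟩ := List.mem_cons.not.1 hA |> not_or.1
    rw [monList, List.map_cons, List.prod_cons, ← monList, ih hA]
    split_ifs with h
    · rw [exponent_cons_of_le A (by omega) (by omega), monomial_single_add, pow_one]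
    · rw [exponent_cons_of_lt A (by omega), one_mul]

/-- `I_{c,(n,d,t)}` has linear quotients with respect to
the lexicographic order: for a generator `u_r`, the colon of the ideal
generated by the lexicographically larger generators by `u_r` is generated by
variables; more precisely, for every generator `u_k >_lex u_r` there is a
variable `x_q` with `x_q · u_r` in that ideal (i.e. some generator
`v >_lex u_r` divides `x_q u_r`) and `x_q` dividing `u_k / gcd(u_k, u_r)`.
(For monomials given by ascending index lists, `u >_lex v` as monomials
means the index list of `u` is lexicographically smaller.) -/
theorem stmt_6 (K : Type*) [Field K] (c n d t : ℕ) (ur : List ℕ)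
    (hur : ur ∈ Gen c n d t) :
    (∃ V : Set (Fin n),
      (Ideal.span (monList K n '' {v | v ∈ Gen c n d t ∧ List.Lex (· < ·) v ur})).colon
          (Ideal.span {monList K n ur}) =
        Ideal.span ((fun i => (X i : MvPolynomial (Fin n) K)) '' V)) ∧
    ∀ uk ∈ Gen c n d t, List.Lex (· < ·) uk ur →
      ∃ q, uk.count q > ur.count q ∧
        ∃ v ∈ Gen c n d t, List.Lex (· < ·) v ur ∧
          (↑v : Multiset ℕ) ≤ q ::ₘ (↑ur : Multiset ℕ) := by
  have hzero : ∀ v ∈ Gen c n d t, 0 ∉ v := fun v hv h0 => by have := hv.2.2.2 0 h0; omega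
  set S := {v | v ∈ Gen c n d t ∧ List.Lex (· < ·) v ur}
  have hS : monList K n '' S = (fun a => monomial a (1 : K)) '' (exponent n '' S) := by
    rw [Set.image_image]
    exact Set.image_congr fun v hv => monList_eq_monomial K n (hzero v hv.1)
  refine ⟨?_, fun uk huk hlt => exists_count_lt_of_lex_of_mem_gen huk hur hlt⟩
  rw [hS, monList_eq_monomial K n (hzero ur hur)]
  refine ⟨_, colon_span_monomial_eq_span_X ?_⟩
  rintro _ ⟨u, ⟨hu, hlt⟩, rfl⟩
  obtain ⟨q, hq, v, hv, hvlt, hvle⟩ := exists_count_lt_of_lex_of_mem_gen hu hur hlt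
  obtain ⟨hq₀, hqn⟩ : 1 ≤ q ∧ q ≤ n := hu.2.2.2 q (List.count_pos_iff.1 (by omega))
  refine ⟨⟨q - 1, by omega⟩, ?_, exponent n v, ⟨v, ⟨hv, hvlt⟩, rfl⟩, ?_⟩
  · simpa only [exponent_apply, Nat.sub_add_cancel hq₀] using hq
  · rw [← exponent_cons_of_le ur hq₀ hqn]
    exact exponent_mono hvle
end
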